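/- arXiv:1210.7157 — 5 statements merged into one kernel-verified Lean document; each statement's English description precedes it below -/
import Mathlib

section
/- For every integer d ≥ 1 and every i ≥ 0, the recursively defined quantity a(i) satisfies a(i) = Σ_{j=1}^{i} (-1)^{j+1}/(j!·d^j). -/
open Finset

private noncomputable def ccc (d k : ℕ) : ℝ := 1 / (Nat.factorial k * d ^ k)

private noncomputable def SSS (d m : ℕ) : ℝ :=
  ∑ j ∈ Finset.Icc 1 m, (-1 : ℝ) ^ (j + 1) / (Nat.factorial j * d ^ j)

private lemma den_pos (d : ℕ) (hd : 1 ≤ d) (k : ℕ) :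
    (0 : ℝ) < (Nat.factorial k : ℝ) * (d : ℝ) ^ k := by
  have h1 : (0:ℝ) < (Nat.factorial k : ℝ) := by exact_mod_cast Nat.factorial_pos k
  have h2 : (0:ℝ) < (d:ℝ) ^ k := pow_pos (by exact_mod_cast hd) k
  exact mul_pos h1 h2

private lemma ccc_mul (d : ℕ) (hd : 1 ≤ d) {k n : ℕ} (hk : k ≤ n) :
    ccc d k * ccc d (n - k) = (n.choose k : ℝ) * ccc d n := by
  unfold ccc
  have hfact : ((n.choose k : ℝ) * (Nat.factorial k) * (Nat.factorial (n-k))) = Nat.factorial n := by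
    exact_mod_cast congrArg (Nat.cast : ℕ → ℝ) (Nat.choose_mul_factorial_mul_factorial hk)
  have hpow : (d:ℝ)^k * (d:ℝ)^(n-k) = (d:ℝ)^n := by
    rw [← pow_add]; congr 1; omega
  have h1 := (den_pos d hd k).ne'
  have h2 := (den_pos d hd (n-k)).ne'
  have h3 := (den_pos d hd n).ne'
  rw [div_mul_div_comm, one_mul, mul_one_div, div_eq_div_iff (by positivity) h3]
  rw [← hfact, ← hpow]; ring

private lemma neg_one_pow_sub {m n : ℕ} (h : m ≤ n) :
    (-1:ℝ)^(n-m) = (-1:ℝ)^n * (-1:ℝ)^m := by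
  have hh : (-1:ℝ)^(n-m) * (-1:ℝ)^m = (-1:ℝ)^n := by
    rw [← pow_add]; congr 1; omega
  have hsq : ((-1:ℝ)^m) * ((-1:ℝ)^m) = 1 := by
    rw [← pow_add, ← two_mul, pow_mul]; norm_num
  calc (-1:ℝ)^(n-m) = (-1:ℝ)^(n-m) * (((-1:ℝ)^m) * ((-1:ℝ)^m)) := by rw [hsq, mul_one]
    _ = ((-1:ℝ)^(n-m) * (-1:ℝ)^m) * (-1:ℝ)^m := by ring
    _ = (-1:ℝ)^n * (-1:ℝ)^m := by rw [hh]

private lemma alt_sum (n : ℕ) :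
    ∑ k ∈ Finset.Icc 1 n, (-1:ℝ)^(n-k) * ((n+1).choose k : ℝ) = 1 - (-1:ℝ)^n := by
  have h0 : ∑ i ∈ Finset.range (n+2), (-1:ℝ)^i * ((n+1).choose i : ℝ) = 0 := by
    have := Int.alternating_sum_range_choose (n := n+1)
    simp only [Nat.succ_ne_zero, if_false] at this
    exact_mod_cast this
  have h1 : ∑ i ∈ Finset.range (n+1), (-1:ℝ)^(i+1) * ((n+1).choose (i+1) : ℝ)
      = -1 := by
    have := Finset.sum_range_succ' (fun i => (-1:ℝ)^i * ((n+1).choose i : ℝ)) (n+1)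
    rw [this] at h0
    simp at h0
    linarith [h0]
  have h2 : ∑ i ∈ Finset.range n, (-1:ℝ)^(i+1) * ((n+1).choose (i+1) : ℝ)
      = -1 - (-1:ℝ)^(n+1) := by
    have := Finset.sum_range_succ (fun i => (-1:ℝ)^(i+1) * ((n+1).choose (i+1) : ℝ)) n
    rw [this] at h1
    simp only [Nat.choose_self, Nat.cast_one, mul_one] at h1
    linarith [h1]
  have h3 : ∑ k ∈ Finset.Icc 1 n, (-1:ℝ)^(n-k) * ((n+1).choose k : ℝ)
      = ∑ i ∈ Finset.range n, (-1:ℝ)^(n-(1+i)) * ((n+1).choose (1+i) : ℝ) := by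
    rw [← Finset.Ico_add_one_right_eq_Icc, Finset.sum_Ico_eq_sum_range]
    simp
  rw [h3]
  have h4 : ∀ i ∈ Finset.range n, (-1:ℝ)^(n-(1+i)) * ((n+1).choose (1+i) : ℝ)
      = (-1:ℝ)^n * ((-1:ℝ)^(i+1) * ((n+1).choose (i+1) : ℝ)) := by
    intro i hi
    rw [Finset.mem_range] at hi
    rw [show (1+i) = (i+1) by omega, neg_one_pow_sub (by omega : i+1 ≤ n)]
    ring
  rw [Finset.sum_congr rfl h4, ← Finset.mul_sum, h2]
  have h2n : (-1:ℝ)^n * (-1:ℝ)^n = 1 := by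
    rw [← pow_add, ← two_mul, pow_mul]; norm_num
  have hn1 : (-1:ℝ)^(n+1) = -(-1:ℝ)^n := by rw [pow_succ]; ring
  rw [hn1]
  linear_combination h2n

private lemma keyS (d : ℕ) (hd : 1 ≤ d) :
    ∀ n, ∑ k ∈ Finset.Icc 1 n, ccc d k * (1 - SSS d (n - k)) = SSS d n := by
  intro n
  induction n with
  | zero => simp [SSS]
  | succ n ih =>
    have hSstep : ∀ m : ℕ, SSS d (m+1) = SSS d m + (-1:ℝ)^m * ccc d (m+1) := by
      intro m
      unfold SSS ccc
      rw [Finset.sum_Icc_succ_top (Nat.succ_le_succ (Nat.zero_le m))]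
      rw [show (-1:ℝ)^(m+1+1) = (-1:ℝ)^m by rw [pow_succ, pow_succ]; ring]
      rw [mul_one_div]
    rw [Finset.sum_Icc_succ_top (Nat.succ_le_succ (Nat.zero_le n))]
    have hlast : ccc d (n+1) * (1 - SSS d (n+1-(n+1))) = ccc d (n+1) := by
      simp [SSS]
    rw [hlast]
    have hpt : ∀ k ∈ Finset.Icc 1 n,
        ccc d k * (1 - SSS d (n+1-k))
          = ccc d k * (1 - SSS d (n-k))
            - (-1:ℝ)^(n-k) * ((n+1).choose k : ℝ) * ccc d (n+1) := by
      intro k hk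
      rw [Finset.mem_Icc] at hk
      have h1 : n + 1 - k = (n - k) + 1 := by omega
      rw [h1, hSstep (n-k)]
      have h2 : ccc d k * ccc d ((n-k)+1) = ((n+1).choose k : ℝ) * ccc d (n+1) := by
        have := ccc_mul d hd (k := k) (n := n+1) (by omega)
        rwa [show n+1-k = (n-k)+1 by omega] at this
      linear_combination (-(-1:ℝ)^(n-k)) * h2
    rw [Finset.sum_congr rfl hpt, Finset.sum_sub_distrib, ih]
    have : ∑ k ∈ Finset.Icc 1 n, (-1:ℝ)^(n-k) * ((n+1).choose k : ℝ) * ccc d (n+1)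
        = (1 - (-1:ℝ)^n) * ccc d (n+1) := by
      rw [← Finset.sum_mul, alt_sum]
    rw [this, hSstep n]
    ring

/-- Fix an integer `d ≥ 1` and define recursively `a 0 = 0`,
`b i j = (1/(j! d^j)) * (1 - a (i-j))` for `1 ≤ j ≤ i` and `a i = ∑_{k=1}^i b i k`.
Then `a i = ∑_{j=1}^{i} (-1)^{j+1}/(j! d^j)`. -/
theorem statement0 (d : ℕ) (hd : 1 ≤ d) (a : ℕ → ℝ) (b : ℕ → ℕ → ℝ)
    (ha0 : a 0 = 0)
    (hb : ∀ i j, 1 ≤ j → j ≤ i →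
      b i j = 1 / (Nat.factorial j * d ^ j) * (1 - a (i - j)))
    (ha : ∀ i, 1 ≤ i → a i = ∑ k ∈ Finset.Icc 1 i, b i k)
    (i : ℕ) :
    a i = ∑ j ∈ Finset.Icc 1 i, (-1 : ℝ) ^ (j + 1) / (Nat.factorial j * d ^ j) := by
  have main : ∀ i, a i = SSS d i := by
    intro i
    induction i using Nat.strong_induction_on with
    | _ i IH =>
      match i with
      | 0 => simpa [SSS] using ha0
      | (m+1) =>
        rw [ha (m+1) (Nat.succ_le_succ (Nat.zero_le m))]
        have hpt : ∀ k ∈ Finset.Icc 1 (m+1),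
            b (m+1) k = ccc d k * (1 - SSS d (m+1-k)) := by
          intro k hk
          rw [Finset.mem_Icc] at hk
          rw [hb (m+1) k hk.1 hk.2, IH (m+1-k) (by omega)]
          rfl
        rw [Finset.sum_congr rfl hpt, keyS d hd (m+1)]
  exact main i
end

section
/- For every integer d ≥ 1 and every i ≥ 0, the recursively defined quantity a(i) satisfies a(i) = 1 − exp(−1/d) + Σ_{j=i+1}^{∞} (-1)^j/(j!·d^j); in particular |a(i) − (1 − exp(−1/d))| ≤ 2/((i+1)!·d^{i+1}). -/
open Finset

lemma alt_sum_real {n : ℕ} (hn : n ≠ 0) :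
    ∑ j ∈ Finset.range (n + 1), (-1 : ℝ) ^ j * (n.choose j : ℝ) = 0 := by
  have h := Int.alternating_sum_range_choose_of_ne hn
  have h2 : ((∑ i ∈ Finset.range (n + 1), (-1 : ℤ) ^ i * n.choose i : ℤ) : ℝ) = 0 := by
    rw [h]; simp
  push_cast at h2
  exact h2

/-- The convolution identity over the full range. -/
lemma conv0 (x : ℝ) (hx : 0 < x) (m : ℕ) (hm : m ≠ 0) :
    ∑ j ∈ Finset.range (m + 1),
      (1 / (Nat.factorial j * x ^ j)) * ((-1 : ℝ) ^ (m - j) / (Nat.factorial (m - j) * x ^ (m - j))) = 0 := by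
  have key : ∀ j ∈ Finset.range (m + 1),
      (1 / (Nat.factorial j * x ^ j)) * ((-1 : ℝ) ^ (m - j) / (Nat.factorial (m - j) * x ^ (m - j)))
        = ((-1 : ℝ) ^ m / (Nat.factorial m * x ^ m)) * ((-1 : ℝ) ^ j * (m.choose j : ℝ)) := by
    intro j hj
    have hj' : j ≤ m := by simpa [Nat.lt_succ_iff] using hj
    have h1 : x ^ j * x ^ (m - j) = x ^ m := by
      rw [← pow_add]; congr 1; omega
    have h2 : (-1 : ℝ) ^ (m - j) * (-1 : ℝ) ^ j = (-1 : ℝ) ^ m := by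
      rw [← pow_add]; congr 1; omega
    have h3 : (m.choose j : ℝ) * (Nat.factorial j) * (Nat.factorial (m - j)) = Nat.factorial m := by
      exact_mod_cast congrArg (Nat.cast : ℕ → ℝ) (Nat.choose_mul_factorial_mul_factorial hj')
    have hfj : (0:ℝ) < Nat.factorial j := by exact_mod_cast (Nat.factorial_pos j)
    have hfmj : (0:ℝ) < Nat.factorial (m - j) := by exact_mod_cast (Nat.factorial_pos (m - j))
    have hfm : (0:ℝ) < Nat.factorial m := by exact_mod_cast (Nat.factorial_pos m)
    have hxj : (0:ℝ) < x ^ j := pow_pos hx j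
    have hxmj : (0:ℝ) < x ^ (m - j) := pow_pos hx (m - j)
    have hxm : (0:ℝ) < x ^ m := pow_pos hx m
    have h4 : (-1 : ℝ) ^ m * (-1 : ℝ) ^ j = (-1 : ℝ) ^ (m - j) := by
      rw [← pow_add]
      have hmj : m + j = (m - j) + 2 * j := by omega
      rw [hmj, pow_add, pow_mul]; norm_num
    field_simp
    linear_combination (-((m.choose j : ℝ) * (Nat.factorial j : ℝ) * (Nat.factorial (m - j) : ℝ) *
        x ^ j * x ^ (m - j))) * h4 -
      ((-1 : ℝ) ^ (m - j) * x ^ j * x ^ (m - j)) * h3 -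
      ((Nat.factorial m : ℝ) * (-1 : ℝ) ^ (m - j)) * h1
  rw [Finset.sum_congr rfl key, ← Finset.mul_sum, alt_sum_real hm, mul_zero]

lemma convIcc (x : ℝ) (hx : 0 < x) (m : ℕ) (hm : m ≠ 0) :
    ∑ j ∈ Finset.Icc 1 m,
      (1 / (Nat.factorial j * x ^ j)) * ((-1 : ℝ) ^ (m - j) / (Nat.factorial (m - j) * x ^ (m - j)))
      = -((-1 : ℝ) ^ m / (Nat.factorial m * x ^ m)) := by
  have hr : Finset.range (m + 1) = insert 0 (Finset.Icc 1 m) := by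
    ext k; simp [Nat.lt_succ_iff]; omega
  have h0 := conv0 x hx m hm
  rw [hr, Finset.sum_insert (by simp)] at h0
  simp only [Nat.factorial_zero, pow_zero, Nat.sub_zero, Nat.cast_one] at h0
  linarith [h0]

/-- Telescoping identity: the recursion's right-hand side applied to partial sums. -/
lemma Qlem (x : ℝ) (hx : 0 < x) : ∀ n : ℕ,
    ∑ j ∈ Finset.Icc 1 n, (1 / (Nat.factorial j * x ^ j)) *
      (∑ k ∈ Finset.range (n - j + 1), (-1 : ℝ) ^ k / (Nat.factorial k * x ^ k))
    = 1 - ∑ k ∈ Finset.range (n + 1), (-1 : ℝ) ^ k / (Nat.factorial k * x ^ k) := by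
  intro n
  induction n with
  | zero => simp
  | succ n ih =>
    have hins : Finset.Icc 1 (n + 1) = insert (n + 1) (Finset.Icc 1 n) := by
      ext k; simp; omega
    rw [hins, Finset.sum_insert (by simp)]
    have hstep : ∀ j ∈ Finset.Icc 1 n,
        (1 / (Nat.factorial j * x ^ j)) *
          (∑ k ∈ Finset.range (n + 1 - j + 1), (-1 : ℝ) ^ k / (Nat.factorial k * x ^ k))
        = (1 / (Nat.factorial j * x ^ j)) *
            (∑ k ∈ Finset.range (n - j + 1), (-1 : ℝ) ^ k / (Nat.factorial k * x ^ k))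
          + (1 / (Nat.factorial j * x ^ j)) *
            ((-1 : ℝ) ^ (n + 1 - j) / (Nat.factorial (n + 1 - j) * x ^ (n + 1 - j))) := by
      intro j hj
      have hj' : j ≤ n := (Finset.mem_Icc.mp hj).2
      have h : n + 1 - j = (n - j) + 1 := by omega
      rw [h, Finset.sum_range_succ, mul_add, ← h]
    rw [Finset.sum_congr rfl hstep, Finset.sum_add_distrib, ih]
    have hconv := convIcc x hx (n + 1) (Nat.succ_ne_zero n)
    rw [hins, Finset.sum_insert (by simp)] at hconv
    simp only [Nat.sub_self, Nat.factorial_zero, pow_zero, Nat.cast_one, mul_one, one_mul,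
      div_one] at hconv
    rw [Finset.sum_range_succ (n := n + 1)]
    simp only [Nat.sub_self, Nat.factorial_zero, pow_zero, Nat.cast_one, mul_one, one_mul,
      div_one, zero_add, Finset.sum_range_one]
    linarith [hconv]


/-- Fix an integer `d ≥ 1` and define recursively `a 0 = 0`,
`b i j = (1/(j! d^j)) * (1 - a (i-j))` for `1 ≤ j ≤ i` and `a i = ∑_{k=1}^i b i k`.
Then `a i = 1 - exp(-1/d) + ∑_{j=i+1}^∞ (-1)^j/(j! d^j)` (the infinite sum is written
with the index shift `j = m + (i+1)`); in particular
`|a i - (1 - exp (-1/d))| ≤ 2/((i+1)! d^(i+1))`. -/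
theorem statement1 (d : ℕ) (hd : 1 ≤ d) (a : ℕ → ℝ) (b : ℕ → ℕ → ℝ)
    (ha0 : a 0 = 0)
    (hb : ∀ i j, 1 ≤ j → j ≤ i →
      b i j = 1 / (Nat.factorial j * d ^ j) * (1 - a (i - j)))
    (ha : ∀ i, 1 ≤ i → a i = ∑ k ∈ Finset.Icc 1 i, b i k)
    (i : ℕ) :
    a i = 1 - Real.exp (-1 / d) +
        ∑' m : ℕ, (-1 : ℝ) ^ (m + (i + 1)) /
          (Nat.factorial (m + (i + 1)) * d ^ (m + (i + 1))) ∧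
      |a i - (1 - Real.exp (-1 / d))| ≤ 2 / (Nat.factorial (i + 1) * d ^ (i + 1)) := by
  set x : ℝ := (d : ℝ) with hxdef
  have hx1 : (1 : ℝ) ≤ x := by rw [hxdef]; exact_mod_cast hd
  have hx : (0 : ℝ) < x := lt_of_lt_of_le one_pos hx1
  set f : ℕ → ℝ := fun k => (-1 : ℝ) ^ k / (Nat.factorial k * x ^ k) with hfdef
  -- main identity
  have key : ∀ n : ℕ, a n = 1 - ∑ k ∈ Finset.range (n + 1), f k := by
    intro n
    induction n using Nat.strong_induction_on with
    | _ n IH =>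
      match n with
      | 0 => simp [ha0, hfdef]
      | (m + 1) =>
        rw [ha (m + 1) (by omega)]
        have hbs : ∀ k ∈ Finset.Icc 1 (m + 1),
            b (m + 1) k = (1 / (Nat.factorial k * x ^ k)) *
              (∑ j ∈ Finset.range ((m + 1) - k + 1), (-1 : ℝ) ^ j / (Nat.factorial j * x ^ j)) := by
          intro k hk
          obtain ⟨hk1, hk2⟩ := Finset.mem_Icc.mp hk
          rw [hb (m + 1) k hk1 hk2, IH ((m + 1) - k) (by omega)]
          simp [hfdef]
        rw [Finset.sum_congr rfl hbs, Qlem x hx (m + 1)]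
  -- summability and exp
  have hsum0 : Summable (fun k : ℕ => (-1 / x) ^ k / Nat.factorial k) :=
    Real.summable_pow_div_factorial (-1 / x)
  have hfeq : ∀ k : ℕ, (-1 / x) ^ k / Nat.factorial k = f k := by
    intro k
    rw [hfdef, div_pow]
    rw [div_div]
    ring_nf
  have hsum : Summable f := by
    rw [← funext hfeq]; exact hsum0
  have hexp : Real.exp (-1 / x) = ∑' k, f k := by
    rw [Real.exp_eq_exp_ℝ, NormedSpace.exp_eq_tsum_div]
    exact tsum_congr hfeq
  have hsplit : (∑ k ∈ Finset.range (i + 1), f k) + ∑' m : ℕ, f (m + (i + 1)) = ∑' k, f k :=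
    Summable.sum_add_tsum_nat_add (i + 1) hsum
  have htail : Real.exp (-1 / x) - ∑ k ∈ Finset.range (i + 1), f k = ∑' m : ℕ, f (m + (i + 1)) := by
    rw [hexp, ← hsplit]; ring
  constructor
  · rw [key i]
    have : (∑' m : ℕ, (-1 : ℝ) ^ (m + (i + 1)) /
        (Nat.factorial (m + (i + 1)) * x ^ (m + (i + 1)))) = ∑' m : ℕ, f (m + (i + 1)) := rfl
    rw [this, ← htail]
    ring
  · have habs : a i - (1 - Real.exp (-1 / x)) = ∑' m : ℕ, f (m + (i + 1)) := by
      rw [key i, ← htail]; ring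
    rw [habs]
    -- bound the tail
    set C : ℝ := 1 / (Nat.factorial (i + 1) * x ^ (i + 1)) with hCdef
    have hgeo : HasSum (fun m : ℕ => C * (1 / 2 : ℝ) ^ m) (C * (1 - 1 / 2)⁻¹) :=
      (hasSum_geometric_of_lt_one (by norm_num) (by norm_num)).mul_left C
    have hbound : ∀ m : ℕ, ‖f (m + (i + 1))‖ ≤ C * (1 / 2 : ℝ) ^ m := by
      intro m
      set k := m + (i + 1) with hkdef
      have hpos : (0 : ℝ) < Nat.factorial k * x ^ k := by positivity
      have hnorm : ‖f k‖ = 1 / (Nat.factorial k * x ^ k) := by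
        rw [hfdef]
        simp only [Real.norm_eq_abs, abs_div, abs_pow, abs_neg, abs_one, one_pow]
        congr 1
        exact abs_of_pos hpos
      rw [hnorm]
      have hC2 : C * (1 / 2 : ℝ) ^ m = 1 / (Nat.factorial (i + 1) * x ^ (i + 1) * 2 ^ m) := by
        rw [hCdef, div_pow, one_pow, div_mul_div_comm, one_mul, mul_assoc]
      rw [hC2]
      apply one_div_le_one_div_of_le (by positivity)
      have hnat : (Nat.factorial (i + 1) : ℝ) * 2 ^ m ≤ (Nat.factorial k : ℝ) := by
        have h1 : Nat.factorial (i + 1) * 2 ^ m ≤ Nat.factorial (i + 1 + m) := by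
          calc Nat.factorial (i + 1) * 2 ^ m
              ≤ Nat.factorial (i + 1) * (i + 1 + 1) ^ m :=
                Nat.mul_le_mul_left _ (Nat.pow_le_pow_left (by omega) m)
            _ ≤ Nat.factorial (i + 1 + m) := Nat.factorial_mul_pow_le_factorial
        have h2 : k = i + 1 + m := by omega
        rw [h2]
        exact_mod_cast h1
      have hxm : (1 : ℝ) ≤ x ^ m := one_le_pow₀ hx1
      have hxk : x ^ k = x ^ (i + 1) * x ^ m := by
        rw [← pow_add]; congr 1; omega
      calc (Nat.factorial (i + 1) : ℝ) * x ^ (i + 1) * 2 ^ m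
          = ((Nat.factorial (i + 1) : ℝ) * 2 ^ m) * x ^ (i + 1) := by ring
        _ ≤ (Nat.factorial k : ℝ) * x ^ (i + 1) :=
            mul_le_mul_of_nonneg_right hnat (by positivity)
        _ ≤ (Nat.factorial k : ℝ) * x ^ (i + 1) * x ^ m :=
            le_mul_of_one_le_right (by positivity) hxm
        _ = (Nat.factorial k : ℝ) * x ^ k := by rw [hxk]; ring
    have hfin := tsum_of_norm_bounded hgeo hbound
    rw [Real.norm_eq_abs] at hfin
    have hCval : C * (1 - 1 / 2 : ℝ)⁻¹ = 2 / (Nat.factorial (i + 1) * x ^ (i + 1)) := by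
      rw [hCdef]; norm_num; ring
    rw [hCval] at hfin
    exact hfin
end

section
/- For all integers n ≥ 1, d ≥ 1 and j ≥ 1 with j ≤ ⌊n/d⌋ =: i, the number of permutations in S_n whose cycle decomposition contains precisely j cycles of length d equals n!·b(i,j); that is, #ℬ_n(d,j) = n!·b(i,j) = (n!/(j!·d^j))·(1 − a(i−j)). -/
/-- The length of the cycle of the permutation `g` on which the point `x` lies
(a fixed point lies on a cycle of length 1): the cardinality of the orbit of `x`
under `g`, i.e. of the set of points lying on the same cycle as `x`. -/
noncomputable def cycleLengthAt {n : ℕ} (g : Equiv.Perm (Fin n)) (x : Fin n) : ℕ :=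
  Nat.card {y : Fin n // g.SameCycle x y}

/-- `g` contains precisely `j` cycles of length `d` if and only if precisely `j * d`
points lie on cycles of length `d`. -/
def hasPreciselyCycles {n : ℕ} (g : Equiv.Perm (Fin n)) (d j : ℕ) : Prop :=
  Nat.card {x : Fin n // cycleLengthAt g x = d} = j * d

/-!
Let `M n j` be the number of permutations of `Fin n` with exactly `j` cycles of length `d`.
A permutation `g` together with a point `x` on a `d`-cycle of `g` is the same as an injection
`Fin d ↪ Fin n` listing that cycle from `x` on, together with a permutation of the other `n - d`
points; `g` has one `d`-cycle more than the latter. Double counting these pairs gives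
`M n (j + 1) * ((j + 1) * d) = n (n - 1) ⋯ (n - d + 1) * M (n - d) j`, so `M n j * j! * d ^ j / n!`
depends only on `⌊n / d⌋ - j`. Its value at `j = 0` is forced by `∑ j, M n j = n!`, and this is
precisely the recursion defining `a` and `b`.
-/

open Function Fin.NatCast

theorem Function.Semiconj.minimalPeriod_eq {α β : Type*} {fa : α → α} {fb : β → β} {e : β → α}
    (he : Injective e) (h : Semiconj e fb fa) (y : β) :
    minimalPeriod fa (e y) = minimalPeriod fb y := by
  rw [minimalPeriod_eq_minimalPeriod_iff]
  intro n
  simp only [IsPeriodicPt, IsFixedPt, ← (h.iterate_right n).eq, he.eq_iff]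

theorem finRotate_iterate_apply {n : ℕ} [NeZero n] (m : ℕ) (i : Fin n) :
    (finRotate n)^[m] i = i + (m : Fin n) := by
  induction m with
  | zero => simp
  | succ m ih => rw [iterate_succ_apply', ih, finRotate_apply, Nat.cast_succ, add_assoc]

theorem minimalPeriod_finRotate {n : ℕ} [NeZero n] (i : Fin n) :
    minimalPeriod (finRotate n) i = n := by
  have hper : ∀ m, IsPeriodicPt (finRotate n) m i ↔ n ∣ m := fun m => by
    rw [IsPeriodicPt, IsFixedPt, finRotate_iterate_apply, add_eq_left, Fin.natCast_eq_zero]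
  exact Nat.dvd_antisymm ((isPeriodicPt_iff_minimalPeriod_dvd).1 ((hper n).2 dvd_rfl))
    ((hper _).1 (isPeriodicPt_minimalPeriod _ _))

namespace Equiv.Perm

variable {α β : Type*}

theorem card_sameCycle_eq_minimalPeriod [Finite α] (g : Perm α) (x : α) :
    Nat.card {y // g.SameCycle x y} = minimalPeriod g x := by
  have hmem : ∀ y, g.SameCycle x y ↔ y ∈ MulAction.orbit (Subgroup.zpowers g) x := fun y => by
    simp [MulAction.mem_orbit_iff, SameCycle, Subgroup.smul_def]
  have := Fintype.ofFinite α
  classical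
  rw [Nat.card_congr (subtypeEquivRight hmem), Nat.card_eq_fintype_card]
  exact (MulAction.minimalPeriod_eq_card (a := g) (b := x)).symm

noncomputable def numPtsOfMinimalPeriod (g : Perm α) (d : ℕ) : ℕ :=
  Nat.card {x // minimalPeriod g x = d}

theorem numPtsOfMinimalPeriod_permCongr (e : α ≃ β) (g : Perm α) (d : ℕ) :
    (e.permCongr g).numPtsOfMinimalPeriod d = g.numPtsOfMinimalPeriod d := by
  have h : Semiconj e g (e.permCongr g) := fun x => by simp [permCongr_apply]
  exact Nat.card_congr (e.subtypeEquiv fun x => by rw [h.minimalPeriod_eq e.injective]).symm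

open Classical in
noncomputable def insertCycle {d : ℕ} (f : Fin d ↪ α) (g : Perm {y // y ∉ Set.range f}) :
    Perm α :=
  subtypeCongr ((Equiv.ofInjective f f.injective).permCongr (finRotate d)) g

section insertCycle

variable {d : ℕ} (f : Fin d ↪ α) (g : Perm {y // y ∉ Set.range f})

theorem semiconj_insertCycle : Semiconj f (finRotate d) (insertCycle f g) := fun k => by
  classical
  rw [insertCycle, subtypeCongr.left_apply _ _ (Set.mem_range_self k)]
  have : (⟨f k, Set.mem_range_self k⟩ : Set.range f) = Equiv.ofInjective f f.injective k := rfl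
  rw [this, permCongr_apply, symm_apply_apply, ofInjective_apply]

theorem insertCycle_apply_of_notMem {y : α} (hy : y ∉ Set.range f) :
    insertCycle f g y = g ⟨y, hy⟩ := by
  classical
  exact subtypeCongr.right_apply _ _ hy

theorem semiconj_val_insertCycle : Semiconj Subtype.val g (insertCycle f g) := fun y =>
  (insertCycle_apply_of_notMem f g y.2).symm

theorem minimalPeriod_insertCycle_apply [NeZero d] (k : Fin d) :
    minimalPeriod (insertCycle f g) (f k) = d := by
  rw [(semiconj_insertCycle f g).minimalPeriod_eq f.injective, minimalPeriod_finRotate]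

theorem insertCycle_iterate_apply_zero [NeZero d] (k : Fin d) :
    (insertCycle f g)^[k] (f 0) = f k := by
  rw [← (semiconj_insertCycle f g).iterate_right k 0, finRotate_iterate_apply, zero_add,
    Fin.cast_val_eq_self]

theorem numPtsOfMinimalPeriod_insertCycle [Finite α] [NeZero d] :
    (insertCycle f g).numPtsOfMinimalPeriod d = d + g.numPtsOfMinimalPeriod d := by
  classical
  set c := insertCycle f g
  let e := Equiv.sumCompl (· ∈ Set.range f)
  have hsplit : {x // minimalPeriod c x = d} ≃
      {y : {y // y ∈ Set.range f} // minimalPeriod c y = d} ⊕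
        {y : {y // y ∉ Set.range f} // minimalPeriod c y = d} :=
    (e.symm.subtypeEquiv (q := fun s => minimalPeriod c (e s) = d)
      fun x => by rw [e.apply_symm_apply]).trans subtypeSum
  rw [numPtsOfMinimalPeriod, Nat.card_congr hsplit, Nat.card_sum]
  congr 1
  · rw [Nat.card_congr (subtypeUnivEquiv ?_), Nat.card_range_of_injective f.injective,
      Nat.card_fin]
    rintro ⟨_, k, rfl⟩
    exact minimalPeriod_insertCycle_apply f g k
  · exact Nat.card_congr (subtypeEquivRight fun y => by
      rw [(semiconj_val_insertCycle f g).minimalPeriod_eq Subtype.val_injective])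

end insertCycle

theorem exists_insertCycle_eq {d : ℕ} [NeZero d] (g : Perm α) {x : α}
    (hx : minimalPeriod g x = d) :
    ∃ (f : Fin d ↪ α) (g' : Perm {y // y ∉ Set.range f}), insertCycle f g' = g ∧ f 0 = x := by
  let f : Fin d ↪ α := ⟨fun k => g^[k] x, fun k l hkl =>
    Fin.ext (iterate_injOn_Iio_minimalPeriod (hx ▸ k.2) (hx ▸ l.2) hkl)⟩
  have hf : Semiconj f (finRotate d) g := fun k => by
    change g^[(finRotate d k : ℕ)] x = g (g^[k] x)
    rw [← iterate_succ_apply' (f := ⇑g), ← iterate_mod_minimalPeriod_eq (n := k + 1), hx,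
      finRotate_apply, Fin.val_add]
    simp
  have hinv : ∀ y, g y ∉ Set.range f ↔ y ∉ Set.range f := by
    intro y
    rw [not_iff_not]
    constructor
    · rintro ⟨k, hk⟩
      refine ⟨(finRotate d).symm k, g.injective ?_⟩
      rw [← hf, apply_symm_apply, hk]
    · rintro ⟨k, rfl⟩
      exact ⟨finRotate d k, hf k⟩
  refine ⟨f, g.subtypePerm hinv, ?_, show g^[((0 : Fin d) : ℕ)] x = x by simp⟩
  ext y
  by_cases hy : y ∈ Set.range f
  · obtain ⟨k, rfl⟩ := hy
    rw [← semiconj_insertCycle f _ k, hf k]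
  · rw [insertCycle_apply_of_notMem _ _ hy]
    rfl

theorem sigma_eq_of_insertCycle_eq {d : ℕ} [NeZero d] {f₁ f₂ : Fin d ↪ α}
    {g₁ : Perm {y // y ∉ Set.range f₁}} {g₂ : Perm {y // y ∉ Set.range f₂}}
    (h : insertCycle f₁ g₁ = insertCycle f₂ g₂) (h0 : f₁ 0 = f₂ 0) :
    (⟨f₁, g₁⟩ : Σ f : Fin d ↪ α, Perm {y // y ∉ Set.range f}) = ⟨f₂, g₂⟩ := by
  obtain rfl : f₁ = f₂ := DFunLike.ext _ _ fun k => by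
    rw [← insertCycle_iterate_apply_zero f₁ g₁, ← insertCycle_iterate_apply_zero f₂ g₂, h, h0]
  obtain rfl : g₁ = g₂ := Equiv.ext fun y => Subtype.ext <| by
    rw [semiconj_val_insertCycle f₁ g₁ y, semiconj_val_insertCycle f₁ g₂ y, h]
  rfl

noncomputable def insertCycleEquiv (d : ℕ) [NeZero d] :
    (Σ f : Fin d ↪ α, Perm {y // y ∉ Set.range f}) ≃
      {p : Perm α × α // minimalPeriod p.1 p.2 = d} :=
  Equiv.ofBijective (fun t => ⟨(insertCycle t.1 t.2, t.1 0), minimalPeriod_insertCycle_apply _ _ _⟩)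
    ⟨fun ⟨_, _⟩ ⟨_, _⟩ h => sigma_eq_of_insertCycle_eq (congrArg (·.1.1) h) (congrArg (·.1.2) h),
      fun ⟨(g, _), hx⟩ => by
        obtain ⟨f, g', rfl, rfl⟩ := exists_insertCycle_eq g hx
        exact ⟨⟨f, g'⟩, rfl⟩⟩

noncomputable def numPermsWithCycles (α : Type*) (d j : ℕ) : ℕ :=
  Nat.card {g : Perm α // g.numPtsOfMinimalPeriod d = j * d}

theorem numPermsWithCycles_congr (e : α ≃ β) (d j : ℕ) :
    numPermsWithCycles α d j = numPermsWithCycles β d j :=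
  Nat.card_congr (e.permCongr.subtypeEquiv fun g => by rw [numPtsOfMinimalPeriod_permCongr])

theorem numPermsWithCycles_mul [Fintype α] (d j : ℕ) :
    numPermsWithCycles α d j * (j * d) = Nat.card {p : {p : Perm α × α //
      minimalPeriod p.1 p.2 = d} // p.1.1.numPtsOfMinimalPeriod d = j * d} := by
  classical
  let e : {p : {p : Perm α × α // minimalPeriod p.1 p.2 = d} //
      p.1.1.numPtsOfMinimalPeriod d = j * d} ≃
      Σ g : {g : Perm α // g.numPtsOfMinimalPeriod d = j * d}, {x // minimalPeriod g.1 x = d} :=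
    ⟨fun p => ⟨⟨p.1.1.1, p.2⟩, p.1.1.2, p.1.2⟩, fun s => ⟨⟨(s.1.1, s.2.1), s.2.2⟩, s.1.2⟩,
      fun _ => rfl, fun _ => rfl⟩
  rw [Nat.card_congr e, Nat.card_sigma]
  change _ = ∑ g : {g : Perm α // g.numPtsOfMinimalPeriod d = j * d}, g.1.numPtsOfMinimalPeriod d
  rw [Finset.sum_congr rfl fun g _ => g.2, Finset.sum_const, Finset.card_univ, smul_eq_mul,
    numPermsWithCycles, Nat.card_eq_fintype_card]

theorem card_numPtsOfMinimalPeriod_eq_mul [Fintype α] (d j : ℕ) :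
    Nat.card {t : Σ f : Fin d ↪ α, Perm {y // y ∉ Set.range f} //
      t.2.numPtsOfMinimalPeriod d = j * d} =
      (Fintype.card α).descFactorial d * numPermsWithCycles (Fin (Fintype.card α - d)) d j := by
  classical
  let e : {t : Σ f : Fin d ↪ α, Perm {y // y ∉ Set.range f} //
      t.2.numPtsOfMinimalPeriod d = j * d} ≃
      Σ f : Fin d ↪ α, {g : Perm {y // y ∉ Set.range f} // g.numPtsOfMinimalPeriod d = j * d} :=
    ⟨fun t => ⟨t.1.1, t.1.2, t.2⟩, fun s => ⟨⟨s.1, s.2.1⟩, s.2.2⟩, fun _ => rfl, fun _ => rfl⟩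
  have hcompl : ∀ f : Fin d ↪ α, Fintype.card {y // y ∉ Set.range f} = Fintype.card α - d :=
    fun f => by rw [Fintype.card_subtype_compl, Set.card_range_of_injective f.injective,
      Fintype.card_fin]
  rw [Nat.card_congr e, Nat.card_sigma]
  change ∑ f : Fin d ↪ α, numPermsWithCycles _ d j = _
  rw [Finset.sum_congr rfl fun f _ => numPermsWithCycles_congr
    (Fintype.equivFinOfCardEq (hcompl f)) d j, Finset.sum_const, Finset.card_univ,
    Fintype.card_embedding_eq, Fintype.card_fin, smul_eq_mul]

theorem numPermsWithCycles_succ_mul [Fintype α] {d : ℕ} (hd : 0 < d) (j : ℕ) :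
    numPermsWithCycles α d (j + 1) * ((j + 1) * d) =
      (Fintype.card α).descFactorial d * numPermsWithCycles (Fin (Fintype.card α - d)) d j := by
  have : NeZero d := ⟨hd.ne'⟩
  rw [numPermsWithCycles_mul, ← card_numPtsOfMinimalPeriod_eq_mul]
  refine (Nat.card_congr ((insertCycleEquiv d).subtypeEquiv fun t => ?_)).symm
  change _ ↔ (insertCycle t.1 t.2).numPtsOfMinimalPeriod d = _
  rw [numPtsOfMinimalPeriod_insertCycle, add_one_mul]
  omega

theorem dvd_numPtsOfMinimalPeriod [Finite α] (g : Perm α) (d : ℕ) :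
    d ∣ g.numPtsOfMinimalPeriod d := by
  induction h : Nat.card α using Nat.strong_induction_on generalizing α with
  | _ n ih =>
  by_cases hx : ∃ x, minimalPeriod g x = d
  · obtain ⟨x, hx⟩ := hx
    have : NeZero d :=
      ⟨hx ▸ (minimalPeriod_pos_of_mem_periodicPts (g.injective.mem_periodicPts x)).ne'⟩
    obtain ⟨f, g', rfl, -⟩ := exists_insertCycle_eq g hx
    rw [numPtsOfMinimalPeriod_insertCycle]
    have hlt : Nat.card {y // y ∉ Set.range f} < n :=
      h ▸ Finite.card_subtype_lt (not_not.2 (Set.mem_range_self 0))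
    exact dvd_add dvd_rfl (ih _ hlt g' rfl)
  · have : IsEmpty {x // minimalPeriod g x = d} := ⟨fun x => hx ⟨x.1, x.2⟩⟩
    rw [numPtsOfMinimalPeriod, Nat.card_of_isEmpty]
    exact dvd_zero d

theorem sum_numPermsWithCycles [Fintype α] {d : ℕ} (hd : 0 < d) :
    ∑ j ∈ Finset.range (Fintype.card α / d + 1), numPermsWithCycles α d j =
      (Fintype.card α).factorial := by
  classical
  have hfiber : ∀ j, numPermsWithCycles α d j =
      (Finset.univ.filter fun g : Perm α => g.numPtsOfMinimalPeriod d / d = j).card := fun j => by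
    rw [numPermsWithCycles, Nat.card_eq_fintype_card, Fintype.card_subtype]
    simp only [Nat.div_eq_iff_eq_mul_left hd (dvd_numPtsOfMinimalPeriod _ d)]
  have hmaps : ∀ g ∈ (Finset.univ : Finset (Perm α)),
      g.numPtsOfMinimalPeriod d / d ∈ Finset.range (Fintype.card α / d + 1) := fun g _ => by
    rw [Finset.mem_range, Nat.lt_succ_iff, ← Nat.card_eq_fintype_card]
    exact Nat.div_le_div_right (Finite.card_subtype_le _)
  rw [← Fintype.card_perm, ← Finset.card_univ (α := Perm α),
    Finset.card_eq_sum_card_fiberwise hmaps]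
  exact Finset.sum_congr rfl fun j _ => hfiber j

end Equiv.Perm

section Recurrence

open Finset Nat

variable {d : ℕ} {a : ℕ → ℝ} {b : ℕ → ℕ → ℝ} {M : ℕ → ℕ → ℕ}

theorem sum_range_add_one_eq_of_sum_Icc (ha0 : a 0 = 0)
    (ha : ∀ i, 1 ≤ i → a i = ∑ k ∈ Icc 1 i, b i k) (i : ℕ) : ∑ k ∈ range i, b i (k + 1) = a i := by
  rcases Nat.eq_zero_or_pos i with rfl | hi
  · rw [sum_range_zero, ha0]
  · rw [ha i hi, ← Ico_add_one_right_eq_Icc, sum_Ico_eq_sum_range, Nat.add_sub_cancel]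
    exact sum_congr rfl fun k _ => by rw [add_comm]

theorem cast_mul_factorial_mul_pow_succ (hd : 0 < d)
    (hrec : ∀ n j, M n (j + 1) * ((j + 1) * d) = n.descFactorial d * M (n - d) j)
    {n k : ℕ} (hk : k + 1 ≤ n / d)
    (ih : (M (n - d) k : ℝ) * (k ! * d ^ k) = (n - d)! * (1 - a ((n - d) / d - k))) :
    (M n (k + 1) : ℝ) * ((k + 1)! * d ^ (k + 1)) = n ! * (1 - a (n / d - (k + 1))) := by
  have hdn : d ≤ n := (Nat.one_le_div_iff hd).1 (by omega)
  have hdiv : n / d = (n - d) / d + 1 := Nat.div_eq_sub_div hd hdn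
  have hfact : ((n - d)! : ℝ) * n.descFactorial d = n ! := by
    exact_mod_cast Nat.factorial_mul_descFactorial hdn
  have hrec' : (M n (k + 1) : ℝ) * ((k + 1) * d) = n.descFactorial d * M (n - d) k := by
    exact_mod_cast hrec n k
  calc (M n (k + 1) : ℝ) * ((k + 1)! * d ^ (k + 1))
      = (M n (k + 1) * ((k + 1) * d)) * (k ! * d ^ k) := by push_cast [factorial_succ]; ring
    _ = n.descFactorial d * (M (n - d) k * (k ! * d ^ k)) := by rw [hrec']; ring
    _ = n ! * (1 - a (n / d - (k + 1))) := by
        rw [ih, ← hfact, show (n - d) / d - k = n / d - (k + 1) by omega]; ring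

theorem cast_mul_factorial_mul_pow (hd : 0 < d) (ha0 : a 0 = 0)
    (hb : ∀ i j, 1 ≤ j → j ≤ i → b i j = 1 / (j ! * d ^ j) * (1 - a (i - j)))
    (ha : ∀ i, 1 ≤ i → a i = ∑ k ∈ Icc 1 i, b i k)
    (hrec : ∀ n j, M n (j + 1) * ((j + 1) * d) = n.descFactorial d * M (n - d) j)
    (hsum : ∀ n, ∑ j ∈ range (n / d + 1), M n j = n !) (n j : ℕ) (hj : j ≤ n / d) :
    (M n j : ℝ) * (j ! * d ^ j) = n ! * (1 - a (n / d - j)) := by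
  induction n using Nat.strong_induction_on generalizing j with
  | _ n ih =>
  have hsucc : ∀ k, k + 1 ≤ n / d →
      (M n (k + 1) : ℝ) * ((k + 1)! * d ^ (k + 1)) = n ! * (1 - a (n / d - (k + 1))) := by
    intro k hk
    have hdn : d ≤ n := (Nat.one_le_div_iff hd).1 (by omega)
    refine cast_mul_factorial_mul_pow_succ hd hrec hk (ih (n - d) (by omega) k ?_)
    rw [Nat.div_eq_sub_div hd hdn] at hk
    omega
  cases j with
  | succ k => exact hsucc k hj
  | zero =>
    have hterm : ∀ k ∈ range (n / d), (M n (k + 1) : ℝ) = n ! * b (n / d) (k + 1) := by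
      intro k hk
      have hk : k + 1 ≤ n / d := mem_range.1 hk
      have hX : ((k + 1)! * d ^ (k + 1) : ℝ) ≠ 0 := by positivity
      rw [hb _ _ (Nat.le_add_left 1 k) hk, ← mul_left_inj' hX, hsucc k hk]
      field_simp
    have hsumR : (M n 0 : ℝ) + ∑ k ∈ range (n / d), (M n (k + 1) : ℝ) = n ! := by
      rw [add_comm, ← sum_range_succ' (fun j => (M n j : ℝ))]
      exact_mod_cast hsum n
    rw [sum_congr rfl hterm, ← mul_sum, sum_range_add_one_eq_of_sum_Icc ha0 ha] at hsumR
    simp only [factorial_zero, cast_one, pow_zero, mul_one, Nat.sub_zero]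
    linarith

end Recurrence

theorem hasPreciselyCycles_iff {n : ℕ} (g : Equiv.Perm (Fin n)) (d j : ℕ) :
    hasPreciselyCycles g d j ↔ g.numPtsOfMinimalPeriod d = j * d := by
  simp only [hasPreciselyCycles, cycleLengthAt, Equiv.Perm.card_sameCycle_eq_minimalPeriod,
    Equiv.Perm.numPtsOfMinimalPeriod]

theorem statement3_general (d : ℕ) (hd : 1 ≤ d) (a : ℕ → ℝ) (b : ℕ → ℕ → ℝ)
    (ha0 : a 0 = 0)
    (hb : ∀ i j, 1 ≤ j → j ≤ i →
      b i j = 1 / (Nat.factorial j * d ^ j) * (1 - a (i - j)))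
    (ha : ∀ i, 1 ≤ i → a i = ∑ k ∈ Finset.Icc 1 i, b i k)
    (n j : ℕ) (hj : 1 ≤ j) (hjd : j ≤ n / d) :
    (Nat.card {g : Equiv.Perm (Fin n) // hasPreciselyCycles g d j} : ℝ)
        = Nat.factorial n * b (n / d) j ∧
      (Nat.card {g : Equiv.Perm (Fin n) // hasPreciselyCycles g d j} : ℝ)
        = Nat.factorial n / (Nat.factorial j * d ^ j) * (1 - a (n / d - j)) := by
  let M n j := Equiv.Perm.numPermsWithCycles (Fin n) d j
  have hcard : Nat.card {g : Equiv.Perm (Fin n) // hasPreciselyCycles g d j} = M n j :=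
    Nat.card_congr (Equiv.subtypeEquivRight fun g => hasPreciselyCycles_iff g d j)
  have hrec : ∀ n j, M n (j + 1) * ((j + 1) * d) = n.descFactorial d * M (n - d) j := by
    simpa using fun n => Equiv.Perm.numPermsWithCycles_succ_mul (α := Fin n) hd
  have hsum : ∀ n, ∑ j ∈ Finset.range (n / d + 1), M n j = n.factorial := by
    simpa using fun n => Equiv.Perm.sum_numPermsWithCycles (α := Fin n) hd
  have hM := cast_mul_factorial_mul_pow hd ha0 hb ha hrec hsum n j hjd
  have hformula : (Nat.card {g : Equiv.Perm (Fin n) // hasPreciselyCycles g d j} : ℝ)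
      = Nat.factorial n / (Nat.factorial j * d ^ j) * (1 - a (n / d - j)) := by
    rw [hcard, div_mul_eq_mul_div, ← hM]
    field_simp
  refine ⟨?_, hformula⟩
  rw [hformula, hb _ _ hj hjd]
  ring

/-- Fix `d ≥ 1` and define recursively `a 0 = 0`,
`b i j = (1/(j! d^j)) * (1 - a (i-j))` for `1 ≤ j ≤ i` and `a i = ∑_{k=1}^i b i k`.
For `n ≥ 1`, `j ≥ 1` with `j ≤ ⌊n/d⌋ =: i`, the number of permutations in `S_n`
whose cycle decomposition contains precisely `j` cycles of length `d` equals
`n! * b i j = (n!/(j! d^j)) * (1 - a (i - j))`. -/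
theorem statement3 (d : ℕ) (hd : 1 ≤ d) (a : ℕ → ℝ) (b : ℕ → ℕ → ℝ)
    (ha0 : a 0 = 0)
    (hb : ∀ i j, 1 ≤ j → j ≤ i →
      b i j = 1 / (Nat.factorial j * d ^ j) * (1 - a (i - j)))
    (ha : ∀ i, 1 ≤ i → a i = ∑ k ∈ Finset.Icc 1 i, b i k)
    (n j : ℕ) (hn : 1 ≤ n) (hj : 1 ≤ j) (hjd : j ≤ n / d) :
    (Nat.card {g : Equiv.Perm (Fin n) // hasPreciselyCycles g d j} : ℝ)
        = Nat.factorial n * b (n / d) j ∧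
      (Nat.card {g : Equiv.Perm (Fin n) // hasPreciselyCycles g d j} : ℝ)
        = Nat.factorial n / (Nat.factorial j * d ^ j) * (1 - a (n / d - j)) :=
  statement3_general d hd a b ha0 hb ha n j hj hjd
end

section
/- Let K be a field and let L and F be finite Galois extensions of K inside a common field, with Gal(L/K) isomorphic to the symmetric group S_n for some n ≥ 5, and suppose L is not contained in F. Then the intersection L ∩ F has degree at most 2 over K. -/
/-!
The fixing subgroup of `L ∩ F` in `Gal(L/K) ≅ Sₙ` is normal, since `L ∩ F` is Galois over `K`,
and nontrivial, since `L ∩ F ≠ L`. For `n ≥ 5` every nontrivial normal subgroup of `Sₙ`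
contains `Aₙ`, so it has index at most `2`, and this index is `[L ∩ F : K]`.
-/

open IntermediateField

theorem Equiv.Perm.index_le_two_of_normal {α : Type*} [Fintype α] [DecidableEq α]
    (hα : 5 ≤ Nat.card α) {N : Subgroup (Perm α)} [N.Normal] (hN : N ≠ ⊥) : N.index ≤ 2 := by
  have : Nontrivial α := Finite.one_lt_card_iff_nontrivial.mp (by omega)
  have hdvd := Subgroup.index_dvd_of_le
    (alternatingGroup_le_of_normal hα ((Subgroup.nontrivial_iff_ne_bot N).mpr hN))
  rw [alternatingGroup.index_eq_two] at hdvd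
  exact Nat.le_of_dvd two_pos hdvd

theorem Subgroup.index_le_two_of_normal_of_mulEquiv_perm {G α : Type*} [Group G] [Finite α]
    (e : G ≃* Equiv.Perm α) (hα : 5 ≤ Nat.card α) {N : Subgroup G} [hN : N.Normal]
    (hN_ne : N ≠ ⊥) : N.index ≤ 2 := by
  classical
  have : Fintype α := Fintype.ofFinite α
  have : (N.map (e : G →* Equiv.Perm α)).Normal := hN.map _ e.surjective
  rw [← N.index_map_equiv e]
  exact Equiv.Perm.index_le_two_of_normal hα
    ((map_eq_bot_iff_of_injective N e.injective).not.mpr hN_ne)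

theorem IsGalois.fixingSubgroup_ne_bot {K E : Type*} [Field K] [Field E] [Algebra K E]
    [FiniteDimensional K E] [IsGalois K E] {M : IntermediateField K E} (hM : M ≠ ⊤) :
    M.fixingSubgroup ≠ ⊥ := by
  rw [← fixingSubgroup_top]
  exact fun h ↦ hM (intermediateFieldEquivSubgroup.injective (congrArg OrderDual.toDual h))

theorem IntermediateField.finrank_le_two_of_isGalois_of_ne_top {K E α : Type*} [Field K]
    [Field E] [Algebra K E] [FiniteDimensional K E] [IsGalois K E] [Finite α]
    (e : (E ≃ₐ[K] E) ≃* Equiv.Perm α) (hα : 5 ≤ Nat.card α)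
    (M : IntermediateField K E) [IsGalois K M] (hM : M ≠ ⊤) : Module.finrank K M ≤ 2 := by
  rw [finrank_eq_fixingSubgroup_index]
  exact Subgroup.index_le_two_of_normal_of_mulEquiv_perm e hα (IsGalois.fixingSubgroup_ne_bot hM)

theorem IntermediateField.restrict_ne_top {K Ω : Type*} [Field K] [Field Ω] [Algebra K Ω]
    {L F : IntermediateField K Ω} (hle : F ≤ L) (hLF : ¬ L ≤ F) : restrict hle ≠ ⊤ := by
  intro htop
  refine hLF fun x hx ↦ ?_
  have : (⟨x, hx⟩ : L) ∈ restrict hle := htop ▸ mem_top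
  exact (mem_restrict hle _).mp this

theorem statement8_general {K Ω : Type*} [Field K] [Field Ω] [Algebra K Ω]
    (L F : IntermediateField K Ω)
    [FiniteDimensional K ↥L] [IsGalois K ↥L]
    [IsGalois K ↥F]
    (n : ℕ) (hn : 5 ≤ n)
    (e : (↥L ≃ₐ[K] ↥L) ≃* Equiv.Perm (Fin n))
    (hLF : ¬ L ≤ F) :
    Module.finrank K ↥(L ⊓ F) ≤ 2 := by
  have hle : L ⊓ F ≤ L := inf_le_left
  have : IsGalois K (restrict hle) := IsGalois.of_algEquiv (restrictAlgEquiv hle)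
  rw [(restrictAlgEquiv hle).toLinearEquiv.finrank_eq]
  exact finrank_le_two_of_isGalois_of_ne_top e (by simpa using hn) _
    (restrict_ne_top hle fun h ↦ hLF (h.trans inf_le_right))

/-- Let `K` be a field and `L`, `F` finite Galois extensions of `K` inside a common
field `Ω`, with `Gal(L/K)` isomorphic to the symmetric group `S_n` for some `n ≥ 5`,
and suppose `L` is not contained in `F`. Then `L ∩ F` has degree at most `2` over `K`. -/
theorem statement8 {K Ω : Type*} [Field K] [Field Ω] [Algebra K Ω]
    (L F : IntermediateField K Ω)
    [FiniteDimensional K ↥L] [IsGalois K ↥L]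
    [FiniteDimensional K ↥F] [IsGalois K ↥F]
    (n : ℕ) (hn : 5 ≤ n)
    (e : (↥L ≃ₐ[K] ↥L) ≃* Equiv.Perm (Fin n))
    (hLF : ¬ L ≤ F) :
    Module.finrank K ↥(L ⊓ F) ≤ 2 :=
  statement8_general L F n hn e hLF
end

section
/- Let γ > 0 be real, (a_n)_{n≥1} a sequence of non-negative real numbers with a_n < 1/γ for all n ≥ 1 and Σ_{n=1}^∞ a_n = ∞, and let b_0 ∈ ℝ. Define b_n := b_{n−1} + a_n − γ·b_{n−1}·a_n for n ≥ 1. Then the sequence (b_n) converges to 1/γ. -/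
/-- Let `γ > 0`, let `(a_n)_{n ≥ 1}` be a sequence of non-negative reals with
`a_n < 1/γ` for all `n ≥ 1` whose series diverges to infinity, let `b_0 ∈ ℝ` and
define `b_n := b_{n-1} + a_n - γ b_{n-1} a_n` for `n ≥ 1`.
Then `(b_n)` converges to `1/γ`. -/
theorem statement11 (γ : ℝ) (hγ : 0 < γ) (a b : ℕ → ℝ)
    (ha_nonneg : ∀ n, 1 ≤ n → 0 ≤ a n)
    (ha_lt : ∀ n, 1 ≤ n → a n < 1 / γ)
    (hdiv : Filter.Tendsto (fun N => ∑ n ∈ Finset.Icc 1 N, a n) Filter.atTop Filter.atTop)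
    (hb : ∀ n, 1 ≤ n → b n = b (n - 1) + a n - γ * b (n - 1) * a n) :
    Filter.Tendsto b Filter.atTop (nhds (1 / γ)) := by
  set P : ℕ → ℝ := fun n => ∏ k ∈ Finset.Icc 1 n, (1 - γ * a k) with hP
  have hfac_pos : ∀ k, 1 ≤ k → 0 < 1 - γ * a k := by
    intro k hk
    have := ha_lt k hk
    have : γ * a k < γ * (1 / γ) := by
      exact mul_lt_mul_of_pos_left this hγ
    rw [mul_one_div_cancel hγ.ne'] at this
    linarith
  have hPnonneg : ∀ n, 0 ≤ P n := by
    intro n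
    apply Finset.prod_nonneg
    intro k hk
    exact (hfac_pos k (Finset.mem_Icc.mp hk).1).le
  have key : ∀ n, 1 / γ - b n = (1 / γ - b 0) * P n := by
    intro n
    induction n with
    | zero => simp [hP]
    | succ m ih =>
      have hrec := hb (m + 1) (Nat.le_add_left 1 m)
      simp only [Nat.add_sub_cancel] at hrec
      have hPs : P (m + 1) = P m * (1 - γ * a (m + 1)) := by
        rw [hP]
        exact Finset.prod_Icc_succ_top (Nat.le_add_left 1 m) _
      have hγ1 : γ * (1 / γ) = 1 := mul_one_div_cancel hγ.ne'
      have : 1 / γ - b (m + 1) = (1 / γ - b m) * (1 - γ * a (m + 1)) := by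
        rw [hrec]; field_simp; ring
      rw [this, ih, hPs]; ring
  -- P n ≤ exp (-γ * S n)
  have hPle : ∀ n, P n ≤ Real.exp (-(γ * ∑ k ∈ Finset.Icc 1 n, a k)) := by
    intro n
    have hexp : Real.exp (-(γ * ∑ k ∈ Finset.Icc 1 n, a k))
        = ∏ k ∈ Finset.Icc 1 n, Real.exp (-(γ * a k)) := by
      rw [← Real.exp_sum]
      congr 1
      rw [Finset.mul_sum, ← Finset.sum_neg_distrib]
    rw [hexp]
    apply Finset.prod_le_prod
    · intro k hk; exact (hfac_pos k (Finset.mem_Icc.mp hk).1).le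
    · intro k hk
      have := Real.add_one_le_exp (-(γ * a k))
      linarith
  have hStend : Filter.Tendsto (fun n => -(γ * ∑ k ∈ Finset.Icc 1 n, a k))
      Filter.atTop Filter.atBot := by
    apply Filter.tendsto_neg_atTop_atBot.comp
    exact hdiv.const_mul_atTop hγ
  have hexptend : Filter.Tendsto (fun n => Real.exp (-(γ * ∑ k ∈ Finset.Icc 1 n, a k)))
      Filter.atTop (nhds 0) := Real.tendsto_exp_atBot.comp hStend
  have hPtend : Filter.Tendsto P Filter.atTop (nhds 0) :=
    squeeze_zero hPnonneg hPle hexptend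
  have : Filter.Tendsto (fun n => 1 / γ - (1 / γ - b 0) * P n)
      Filter.atTop (nhds (1 / γ)) := by
    have h := Filter.Tendsto.const_mul (1 / γ - b 0) hPtend
    have h2 := Filter.Tendsto.sub (tendsto_const_nhds (x := 1 / γ) (f := Filter.atTop (α := ℕ))) h
    simpa using h2
  refine this.congr fun n => ?_
  have := key n
  linarith
end
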